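/- The number of (s,s+1)-core partitions with distinct parts equals the Fibonacci number F_{s+1}. -/

import Mathlib

open Finset

/-- `lam` gives the parts of a partition with `l` parts, 1-indexed:
positive parts which are nonincreasing. -/
def IsPartition (lam : ℕ → ℕ) (l : ℕ) : Prop :=
  (∀ i, 1 ≤ i → i ≤ l → 0 < lam i) ∧ ∀ i, 1 ≤ i → i < l → lam (i + 1) ≤ lam i

/-- Hook length of the box `(i,j)` of the Young diagram:
arm (boxes to the right) + leg (boxes below) + 1. -/
def hookLen (lam : ℕ → ℕ) (l i j : ℕ) : ℕ :=
  (lam i - j) + ((Finset.Ioc i l).filter fun r => j ≤ lam r).card + 1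

/-- The β-set: the set of first-column hook lengths `λ_i + l - i`. -/
def betaSet (lam : ℕ → ℕ) (l : ℕ) : Finset ℕ :=
  (Finset.Icc 1 l).image fun i => lam i + l - i

/-- `λ` is an `s`-core: no box of the Young diagram has hook length `s`. -/
def IsCore (lam : ℕ → ℕ) (l s : ℕ) : Prop :=
  ∀ i ∈ Finset.Icc 1 l, ∀ j ∈ Finset.Icc 1 (lam i), hookLen lam l i j ≠ s

/-- `λ` has `d`-distinct parts: consecutive parts differ by at least `d`. -/
def DDistinct (lam : ℕ → ℕ) (l d : ℕ) : Prop :=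
  ∀ i, 1 ≤ i → i < l → lam (i + 1) + d ≤ lam i

/-- `X` is a `d`-th order twin-free set. -/
def TwinFree (d : ℕ) (X : Finset ℕ) : Prop :=
  ∀ x ∈ X, ∀ k, 1 ≤ k → k ≤ d → x + k ∉ X

open Classical in
/-- Number of `d`-th order twin-free subsets of `{1, 2, ..., s-1}`. -/
noncomputable def numTwinFree (d s : ℕ) : ℕ :=
  ((Finset.Icc 1 (s - 1)).powerset.filter fun X => TwinFree d X).card


/-- The parts function (1-indexed) of a partition given as a list of parts. -/
def partOf (L : List ℕ) : ℕ → ℕ := fun i => L.getD (i - 1) 0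

/-! In a partition with distinct parts the hook lengths along the first row fall from
`λ₁ + ℓ - 1` to `1` in steps of `1` or `2`, so they avoid both `s` and `s + 1` only if
`λ₁ + ℓ ≤ s`; conversely, then every hook is shorter than `s`. Among the strict partitions with
`λ₁ + ℓ ≤ s + 2`, those with `λ₁ + ℓ = s + 2` are obtained exactly once each by prepending the
part `s + 1 - ℓ` to one with `λ₁ + ℓ ≤ s`, which gives the Fibonacci recursion. -/

theorem IsPartition.antitoneOn {lam : ℕ → ℕ} {l : ℕ} (h : IsPartition lam l) :
    AntitoneOn lam (Set.Icc 1 l) :=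
  antitoneOn_of_succ_le Set.ordConnected_Icc fun i _ hi hi' => by
    simp only [Order.succ_eq_add_one, Set.mem_Icc] at hi hi' ⊢
    exact h.2 i hi.1 (by omega)

theorem DDistinct.strictAntiOn {lam : ℕ → ℕ} {l : ℕ} (h : DDistinct lam l 1) :
    StrictAntiOn lam (Set.Icc 1 l) :=
  strictAntiOn_of_succ_lt Set.ordConnected_Icc fun i _ hi hi' => by
    simp only [Order.succ_eq_add_one, Set.mem_Icc] at hi hi' ⊢
    exact h i hi.1 (by omega)

theorem hookLen_le {lam : ℕ → ℕ} {l i j : ℕ} (hp : IsPartition lam l) (hi : i ∈ Icc 1 l)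
    (hj : 1 ≤ j) : hookLen lam l i j ≤ lam 1 + l - 1 := by
  obtain ⟨hi1, hil⟩ := mem_Icc.1 hi
  have hlam1 : 0 < lam 1 := hp.1 1 le_rfl (by omega)
  have hlam : lam i ≤ lam 1 := hp.antitoneOn ⟨le_rfl, by omega⟩ ⟨hi1, hil⟩ hi1
  have hleg : #{r ∈ Ioc i l | j ≤ lam r} ≤ l - i :=
    (card_filter_le _ _).trans (Nat.card_Ioc i l).le
  unfold hookLen
  omega

theorem IsPartition.isCore_of_add_le {lam : ℕ → ℕ} {l t : ℕ} (hp : IsPartition lam l)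
    (h : lam 1 + l ≤ t) : IsCore lam l t := fun i hi j hj =>
  ((hookLen_le hp hi (mem_Icc.1 hj).1).trans_lt (by grind)).ne

theorem card_filter_le_le_card_filter_succ_le_add_one {s : Finset ℕ} {f : ℕ → ℕ}
    (hf : Set.InjOn f s) (j : ℕ) : #{r ∈ s | j ≤ f r} ≤ #{r ∈ s | j + 1 ≤ f r} + 1 := by
  have hsplit : {r ∈ s | j ≤ f r} ⊆ {r ∈ s | j + 1 ≤ f r} ∪ {r ∈ s | f r = j} := by
    intro r
    simp only [mem_filter, mem_union]
    grind
  have hfiber : #{r ∈ s | f r = j} ≤ 1 := card_le_one.2 fun a ha b hb => by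
    simp only [mem_filter] at ha hb
    exact hf ha.1 hb.1 (ha.2.trans hb.2.symm)
  grw [hsplit, card_union_le, hfiber]

theorem DDistinct.hookLen_le_hookLen_succ_add_two {lam : ℕ → ℕ} {l i j : ℕ}
    (hd : DDistinct lam l 1) (hj : j + 1 ≤ lam i) :
    hookLen lam l i j ≤ hookLen lam l i (j + 1) + 2 := by
  have hinj : Set.InjOn lam (Ioc i l) := hd.strictAntiOn.injOn.mono fun r hr => by
    simp only [coe_Ioc, Set.mem_Ioc, Set.mem_Icc] at hr ⊢
    omega
  have := card_filter_le_le_card_filter_succ_le_add_one hinj j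
  unfold hookLen
  omega

theorem hookLen_one_one {lam : ℕ → ℕ} {l : ℕ} (hp : IsPartition lam l) (hl : 1 ≤ l) :
    hookLen lam l 1 1 = lam 1 + l - 1 := by
  have hleg : {r ∈ Ioc 1 l | 1 ≤ lam r} = Ioc 1 l :=
    filter_true_of_mem fun r hr => hp.1 r (mem_Ioc.1 hr).1.le (mem_Ioc.1 hr).2
  have := hp.1 1 le_rfl hl
  rw [hookLen, hleg, Nat.card_Ioc]
  omega

theorem DDistinct.hookLen_one_lam_one {lam : ℕ → ℕ} {l : ℕ} (hd : DDistinct lam l 1) :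
    hookLen lam l 1 (lam 1) = 1 := by
  have hleg : {r ∈ Ioc 1 l | lam 1 ≤ lam r} = ∅ :=
    filter_false_of_mem fun r hr => by
      rw [mem_Ioc] at hr
      exact not_le.2 <| hd.strictAntiOn ⟨le_rfl, by omega⟩ ⟨by omega, hr.2⟩ hr.1
  simp [hookLen, hleg]

theorem exists_mem_Icc_eq_or_eq_succ {f : ℕ → ℕ} {a b s : ℕ} (hab : a ≤ b)
    (hstep : ∀ j, a ≤ j → j < b → f j ≤ f (j + 1) + 2) (ha : s ≤ f a) (hb : f b ≤ s + 1) :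
    ∃ j ∈ Set.Icc a b, f j = s ∨ f j = s + 1 := by
  induction b, hab using Nat.le_induction with
  | base => exact ⟨a, ⟨le_rfl, le_rfl⟩, by omega⟩
  | succ b hab ih =>
    by_cases hfb : f b ≤ s + 1
    · obtain ⟨j, hj, hfj⟩ := ih (fun j h1 h2 => hstep j h1 (by omega)) hfb
      exact ⟨j, Set.Icc_subset_Icc_right b.le_succ hj, hfj⟩
    · have := hstep b hab (by omega)
      exact ⟨b + 1, ⟨by omega, le_rfl⟩, by omega⟩

theorem DDistinct.add_le_of_isCore {lam : ℕ → ℕ} {l s : ℕ} (hp : IsPartition lam l)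
    (hd : DDistinct lam l 1) (hl : 1 ≤ l) (hs : IsCore lam l s) (hs1 : IsCore lam l (s + 1)) :
    lam 1 + l ≤ s := by
  by_contra! h
  have hlam : 1 ≤ lam 1 := hp.1 1 le_rfl hl
  obtain ⟨j, hj, hfj⟩ := exists_mem_Icc_eq_or_eq_succ (f := hookLen lam l 1) (s := s) hlam
    (fun j _ hj => hd.hookLen_le_hookLen_succ_add_two hj)
    (by rw [hookLen_one_one hp hl]; omega) (by rw [hd.hookLen_one_lam_one]; omega)
  have h1 : 1 ∈ Icc 1 l := mem_Icc.2 ⟨le_rfl, hl⟩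
  rw [← coe_Icc, mem_coe] at hj
  rcases hfj with hfj | hfj
  · exact hs 1 h1 j hj hfj
  · exact hs1 1 h1 j hj hfj

theorem partOf_add_one {L : List ℕ} {i : ℕ} (hi : i < L.length) : partOf L (i + 1) = L[i] := by
  simp [partOf, hi]

theorem partOf_one (L : List ℕ) : partOf L 1 = L.headD 0 := by
  cases L <;> rfl

theorem isPartition_and_dDistinct_partOf_iff (L : List ℕ) :
    IsPartition (partOf L) L.length ∧ DDistinct (partOf L) L.length 1 ↔
      L.Pairwise (· > ·) ∧ ∀ x ∈ L, 0 < x := by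
  have hdistinct : DDistinct (partOf L) L.length 1 ↔ L.Pairwise (· > ·) := by
    rw [← List.isChain_iff_pairwise, List.isChain_iff_getElem]
    refine ⟨fun h i hi => ?_, fun h i hi1 hil => ?_⟩
    · have := h (i + 1) (by omega) hi
      rwa [partOf_add_one hi, partOf_add_one (by omega), Nat.add_one_le_iff] at this
    · obtain ⟨k, rfl⟩ := Nat.exists_eq_add_one_of_ne_zero (by omega : i ≠ 0)
      rw [partOf_add_one hil, partOf_add_one (by omega)]
      exact h k hil
  have hpos : (∀ i, 1 ≤ i → i ≤ L.length → 0 < partOf L i) ↔ ∀ x ∈ L, 0 < x := by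
    rw [List.forall_mem_iff_getElem]
    refine ⟨fun h i hi => ?_, fun h i hi1 hil => ?_⟩
    · simpa [partOf_add_one hi] using h (i + 1) (by omega) hi
    · obtain ⟨k, rfl⟩ := Nat.exists_eq_add_one_of_ne_zero (by omega : i ≠ 0)
      rw [partOf_add_one hil]
      exact h k hil
  rw [← hdistinct, ← hpos]
  exact ⟨fun h => ⟨h.2, h.1.1⟩, fun h => ⟨⟨h.2, fun i hi1 hil => by grind [h.1 i hi1 hil]⟩, h.1⟩⟩

/-- Strict partitions, as decreasing lists of parts, whose largest hook `λ₁ + ℓ - 1` is less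
than `s`. -/
def smallStrictPartitions (s : ℕ) : Set (List ℕ) :=
  {L | L.Pairwise (· > ·) ∧ (∀ x ∈ L, 0 < x) ∧ L.headD 0 + L.length ≤ s}

theorem mem_smallStrictPartitions_iff (s : ℕ) (L : List ℕ) :
    L ∈ smallStrictPartitions s ↔ IsPartition (partOf L) L.length ∧
      IsCore (partOf L) L.length s ∧ IsCore (partOf L) L.length (s + 1) ∧
      DDistinct (partOf L) L.length 1 := by
  have hiff := isPartition_and_dDistinct_partOf_iff L
  simp only [smallStrictPartitions, Set.mem_ofPred_eq, ← partOf_one]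
  constructor
  · rintro ⟨hsort, hpos, hle⟩
    obtain ⟨hp, hd⟩ := hiff.2 ⟨hsort, hpos⟩
    exact ⟨hp, hp.isCore_of_add_le hle, hp.isCore_of_add_le (by omega), hd⟩
  · rintro ⟨hp, hs, hs1, hd⟩
    refine ⟨(hiff.1 ⟨hp, hd⟩).1, (hiff.1 ⟨hp, hd⟩).2, ?_⟩
    rcases Nat.eq_zero_or_pos L.length with hL | hL
    · simp [List.length_eq_zero_iff.1 hL, partOf]
    · exact hd.add_le_of_isCore hp hL hs hs1

theorem smallStrictPartitions_of_le_one {s : ℕ} (hs : s ≤ 1) :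
    smallStrictPartitions s = {[]} := by
  ext L
  simp only [smallStrictPartitions, Set.mem_ofPred_eq, Set.mem_singleton_iff]
  refine ⟨fun ⟨_, hpos, hle⟩ => ?_, by rintro rfl; simp⟩
  cases L with
  | nil => rfl
  | cons a t =>
    have := hpos a List.mem_cons_self
    simp only [List.headD_cons, List.length_cons] at hle
    omega

theorem smallStrictPartitions_add_two (s : ℕ) :
    smallStrictPartitions (s + 2) = smallStrictPartitions (s + 1) ∪
      (fun L => (s + 1 - L.length) :: L) '' smallStrictPartitions s := by
  ext M
  simp only [Set.mem_union, Set.mem_image, smallStrictPartitions, Set.mem_ofPred_eq]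
  constructor
  · rintro ⟨hsort, hpos, hle⟩
    by_cases hM : M.headD 0 + M.length ≤ s + 1
    · exact Or.inl ⟨hsort, hpos, hM⟩
    right
    obtain _ | ⟨a, t⟩ := M
    · simp at hM
    simp only [List.headD_cons, List.length_cons] at hle hM
    refine ⟨t, ⟨hsort.of_cons, fun x hx => hpos x (List.mem_cons_of_mem _ hx), ?_⟩, by grind⟩
    obtain _ | ⟨b, u⟩ := t
    · simp
    have : b < a := List.rel_of_pairwise_cons hsort List.mem_cons_self
    simp only [List.headD_cons, List.length_cons] at hle hM ⊢
    omega
  · rintro (⟨hsort, hpos, hle⟩ | ⟨L, ⟨hsort, hpos, hle⟩, rfl⟩)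
    · exact ⟨hsort, hpos, by omega⟩
    have hhead : ∀ x ∈ L, x ≤ L.headD 0 := fun x hx => by
      obtain _ | ⟨b, u⟩ := L
      · simp at hx
      exact (List.mem_cons.1 hx).elim (·.le) fun h => (List.rel_of_pairwise_cons hsort h).le
    refine ⟨List.pairwise_cons.2 ⟨fun b hb => ?_, hsort⟩, ?_, ?_⟩
    · have := hhead b hb
      omega
    · simp only [List.mem_cons, forall_eq_or_imp]
      exact ⟨by omega, hpos⟩
    · simp only [List.headD_cons, List.length_cons]
      omega

theorem encard_smallStrictPartitions (s : ℕ) :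
    (smallStrictPartitions s).encard = Nat.fib (s + 1) := by
  induction s using Nat.twoStepInduction with
  | zero => simp [smallStrictPartitions_of_le_one]
  | one => simp [smallStrictPartitions_of_le_one]
  | more s ih ih' =>
    have hdisj : Disjoint (smallStrictPartitions (s + 1))
        ((fun L => (s + 1 - L.length) :: L) '' smallStrictPartitions s) := by
      rw [Set.disjoint_left]
      rintro _ ⟨-, -, hle⟩ ⟨L, ⟨-, -, hleL⟩, rfl⟩
      simp only [List.headD_cons, List.length_cons] at hle
      omega
    have hinj : Function.Injective fun L : List ℕ => (s + 1 - L.length) :: L :=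
      fun _ _ h => congrArg List.tail h
    rw [smallStrictPartitions_add_two, Set.encard_union_eq hdisj, hinj.injOn.encard_image, ih,
      ih', Nat.fib_add_two (n := s + 1)]
    push_cast
    ring

theorem stmt16_general (s : ℕ) :
    {L : List ℕ | IsPartition (partOf L) L.length ∧ IsCore (partOf L) L.length s ∧
      IsCore (partOf L) L.length (s + 1) ∧ DDistinct (partOf L) L.length 1}.ncard =
      Nat.fib (s + 1) := by
  simp only [← mem_smallStrictPartitions_iff, Set.ofPred_mem_eq]
  rw [Set.ncard_def, encard_smallStrictPartitions, ENat.toNat_natCast]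

/-- The number of `(s,s+1)`-core partitions with distinct parts is the
Fibonacci number `F_{s+1}`. -/
theorem stmt16 (s : ℕ) (hs : 0 < s) :
    {L : List ℕ | IsPartition (partOf L) L.length ∧ IsCore (partOf L) L.length s ∧
      IsCore (partOf L) L.length (s + 1) ∧ DDistinct (partOf L) L.length 1}.ncard =
      Nat.fib (s + 1) :=
  stmt16_general s
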